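/- Let R be a quasi-Frobenius ring. Then the following are equivalent: (1) every two-sided ideal of R contained in J(R) equals 0 or J(R); (2) J(R) is a homogeneous semisimple right R-module, i.e., J(R) is semisimple as a right R-module and all of its simple submodules are pairwise isomorphic. -/

import Mathlib

universe u

/-- `M` is `N`-injective. -/
def ModInj (A : Type u) [Ring A] (M : Type u) [AddCommGroup M] [Module A M]
    (N : Type u) [AddCommGroup N] [Module A N] : Prop :=
  ∀ (K : Submodule A N) (f : K →ₗ[A] M), ∃ g : N →ₗ[A] M, ∀ x : K, g x = f x

/-- `S` is quasi-Frobenius: right noetherian and injective as a right `S`-module. -/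
def IsQF (S : Type u) [Ring S] : Prop :=
  IsNoetherianRing Sᵐᵒᵖ ∧
    ∀ (N : Type u) [AddCommGroup N] [Module Sᵐᵒᵖ N], ModInj Sᵐᵒᵖ Sᵐᵒᵖ N

/-- A right ideal of `R` is two-sided. -/
def IsTwoSidedRI (R : Type u) [Ring R] (I : Ideal Rᵐᵒᵖ) : Prop :=
  ∀ x ∈ I, ∀ r : R, x * MulOpposite.op r ∈ I

/-!
Work with left modules over `A = Rᵐᵒᵖ` and write `J` for its Jacobson radical. Since `A` is
self-injective, every endomorphism of `J` is right multiplication by an element of `A`, so the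
two-sided ideals inside `J` are exactly the fully invariant submodules of `J`; for a semisimple
module, having no fully invariant submodules other than `0` and itself is the same as being
isotypic. It remains to see that (1) makes `J` semisimple: `J²` is a two-sided ideal inside `J`,
and `J² = J` forces `J = 0` by Nakayama, so `J² = 0` and `J` is a sum of quotients of `A / J`.
Finally `A / J` is semisimple: by Utumi's theorem every cyclic submodule of it is a direct
summand, and a noetherian module with this property is semisimple.
-/

open Submodule

section Lattice

variable {α : Type*}

def IsEssential [Lattice α] [OrderBot α] (a : α) : Prop :=
  ∀ ⦃b⦄, Disjoint a b → b = ⊥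

theorem IsEssential.mono [Lattice α] [OrderBot α] {a b : α} (hab : a ≤ b) (ha : IsEssential a) :
    IsEssential b :=
  fun _ hc => ha (hc.mono_left hab)

theorem exists_maximal_disjoint [CompleteLattice α] [IsCompactlyGenerated α] (a : α) :
    ∃ c, Maximal (Disjoint · a) c := by
  obtain ⟨c, -, hc⟩ := zorn_le_nonempty₀ {c | Disjoint c a}
    (fun s hs hchain _ _ => ⟨sSup s, hchain.directedOn.disjoint_sSup_left.mpr hs,
      fun _ => le_sSup⟩) ⊥ disjoint_bot_left
  exact ⟨c, hc⟩

theorem Maximal.isEssential_sup [Lattice α] [OrderBot α] [IsModularLattice α] {a c : α}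
    (hc : Maximal (Disjoint · a) c) : IsEssential (c ⊔ a) := by
  intro b hb
  have hbc : b ≤ c := le_sup_left.trans <|
    hc.2 (hc.1.disjoint_sup_left_of_disjoint_sup_right hb.symm) le_sup_right
  exact le_bot_iff.mp (hb.symm.le_bot.trans' (le_inf le_rfl (hbc.trans le_sup_left)))

theorem IsCompl.sup_inf_of_le [Lattice α] [BoundedOrder α] [IsModularLattice α] {a b c d : α}
    (hab : IsCompl a b) (hcb : c ≤ b) (hcd : IsCompl c d) : IsCompl (a ⊔ c) (d ⊓ b) := by
  have hb : c ⊔ d ⊓ b = b := by rw [← sup_inf_assoc_of_le d hcb, hcd.sup_eq_top, top_inf_eq]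
  exact (hcd.disjoint.mono_right inf_le_left).isCompl_sup_left_of_isCompl_sup_right (by rwa [hb])

end Lattice

section Module

variable {A M : Type*} [Ring A] [AddCommGroup M] [Module A M]

theorem IsEssential.comap {N : Type*} [AddCommGroup N] [Module A N] {E : Submodule A N}
    (hE : IsEssential E) (f : M →ₗ[A] N) : IsEssential (E.comap f) := by
  intro K hK
  have hmap : map f K = ⊥ := hE <| disjoint_def.mpr fun _ hxE ⟨k, hk, hfk⟩ => by
    subst hfk
    rw [disjoint_def.mp hK k hxE hk, map_zero]
  exact le_bot_iff.mp <| hK.symm.le_bot.trans' <|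
    le_inf le_rfl fun k hk => by
      rw [mem_comap, (mem_bot A).mp (hmap ▸ mem_map_of_mem hk : f k ∈ (⊥ : Submodule A N))]
      exact E.zero_mem

theorem isSemisimpleModule_of_isCompl_span_singleton [IsNoetherian A M]
    (h : ∀ x : M, ∃ N, IsCompl (span A {x}) N) : IsSemisimpleModule A M := by
  refine { exists_isCompl := fun N => ?_ }
  obtain ⟨P, ⟨hPN, Q, hPQ⟩, hmax⟩ := wellFounded_gt.has_min
    {P : Submodule A M | P ≤ N ∧ ∃ Q, IsCompl P Q} ⟨⊥, bot_le, ⊤, isCompl_bot_top⟩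
  suffices N ≤ P from ⟨Q, le_antisymm hPN this ▸ hPQ⟩
  intro x hx
  obtain ⟨p, hp, q, hq, rfl⟩ := mem_sup.mp (hPQ.sup_eq_top ▸ mem_top : x ∈ P ⊔ Q)
  have hqN : q ∈ N := by simpa using N.sub_mem hx (hPN hp)
  obtain ⟨D, hqD⟩ := h q
  have hle : P ⊔ span A {q} ≤ N := sup_le hPN ((span_singleton_le_iff_mem _ _).mpr hqN)
  have hq' : q ∈ P := by
    by_contra hqP
    refine hmax _ ⟨hle, _, hPQ.sup_inf_of_le ((span_singleton_le_iff_mem _ _).mpr hq) hqD⟩ ?_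
    exact lt_of_le_of_ne le_sup_left fun h => hqP (h ▸ mem_sup_right (mem_span_singleton_self q))
  exact P.add_mem hp hq'

end Module

section Ring

variable {A : Type*} [Ring A]

theorem isCompl_span_mkQ_of_mul_self_sub_mem {I : Ideal A} [I.IsTwoSided] {e : A}
    (he : e * e - e ∈ I) : IsCompl (span A {I.mkQ e}) (span A {I.mkQ (1 - e)}) := by
  constructor
  · refine disjoint_def.mpr fun z hze hz1e => ?_
    obtain ⟨u, rfl⟩ := mem_span_singleton.mp hze
    obtain ⟨v, hv⟩ := mem_span_singleton.mp hz1e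
    rw [← map_smul, ← map_smul, smul_eq_mul, smul_eq_mul, mkQ_apply, mkQ_apply,
      Submodule.Quotient.eq] at hv
    rw [← map_smul, smul_eq_mul, mkQ_apply, Submodule.Quotient.mk_eq_zero]
    have key : u * e = (u * e - v * (1 - e)) * e - (u + v) * (e * e - e) := by noncomm_ring
    rw [key]
    exact I.sub_mem (I.mul_mem_right e (by simpa using I.neg_mem hv)) (I.mul_mem_left _ he)
  · refine codisjoint_iff.mpr (eq_top_iff.mpr fun z _ => ?_)
    obtain ⟨y, rfl⟩ := I.mkQ_surjective z
    have hy : I.mkQ y = y • I.mkQ e + y • I.mkQ (1 - e) := by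
      rw [← map_smul, ← map_smul, ← map_add, smul_eq_mul, smul_eq_mul, ← mul_add,
        add_sub_cancel, mul_one]
    rw [hy]
    exact add_mem (mem_sup_left (smul_mem _ _ (mem_span_singleton_self _)))
      (mem_sup_right (smul_mem _ _ (mem_span_singleton_self _)))

theorem isSemisimpleModule_of_smul_eq_zero (I : Ideal A) [IsSemisimpleModule A (A ⧸ I)]
    {M : Type*} [AddCommGroup M] [Module A M] (h : ∀ a ∈ I, ∀ m : M, a • m = 0) :
    IsSemisimpleModule A M := by
  refine isSemisimpleModule_of_isSemisimpleModule_submodule' (p := fun m : M => span A {m})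
    (fun m => ?_) ?_
  · have hI : I ≤ LinearMap.ker (LinearMap.toSpanSingleton A M m) := fun a ha => h a ha m
    rw [LinearMap.span_singleton_eq_range, ← range_liftQ I _ hI]
    exact IsSemisimpleModule.range _
  · exact eq_top_iff.mpr fun m _ => mem_iSup_of_mem m (mem_span_singleton_self m)

theorem Ring.jacobson_eq_bot_of_mul_self_eq [IsNoetherianRing A]
    (h : Ring.jacobson A * Ring.jacobson A = Ring.jacobson A) : Ring.jacobson A = ⊥ :=
  FG.eq_bot_of_le_jacobson_smul (IsNoetherian.noetherian _) h.ge

theorem Submodule.IsFullyInvariant.isTwoSided_map_subtype {J : Ideal A} [J.IsTwoSided]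
    {N : Submodule A J} (hN : N.IsFullyInvariant) :
    Ideal.IsTwoSided (N.map J.subtype) := by
  refine ⟨fun b hx' => ?_⟩
  obtain ⟨x, hx, rfl⟩ := hx'
  let f : Module.End A J :=
    (LinearMap.toSpanSingleton A A b).restrict fun y hy => J.mul_mem_right b hy
  exact ⟨f x, hN f hx, rfl⟩

theorem Module.Baer.exists_mul_eq (hA : Module.Baer A A) {I : Ideal A} (f : I →ₗ[A] A) :
    ∃ c, ∀ x : I, f x = x * c := by
  obtain ⟨g, hg⟩ := hA I f
  exact ⟨g 1, fun x => by rw [← hg x x.2, ← smul_eq_mul, ← map_smul, smul_eq_mul, mul_one]⟩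

theorem Module.Baer.exists_mul_mul_eq (hA : Module.Baer A A) {C : Ideal A} {u : A}
    (hu : Disjoint C (Ideal.torsionOf A A u)) : ∃ b, ∀ c ∈ C, c * u * b = c := by
  let φ := (LinearMap.toSpanSingleton A A u).domRestrict C
  have hφ : Function.Injective φ := by
    refine LinearMap.ker_eq_bot.mp (eq_bot_iff.mpr fun c hc => ?_)
    exact (mem_bot A).mpr (Subtype.ext (disjoint_def.mp hu c c.2 hc))
  let e := LinearEquiv.ofInjective φ hφ
  obtain ⟨b, hb⟩ := hA.exists_mul_eq (C.subtype ∘ₗ e.symm.toLinearMap)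
  refine ⟨b, fun c hc => ?_⟩
  have := hb (e ⟨c, hc⟩)
  simp only [LinearMap.comp_apply, LinearEquiv.coe_coe, LinearEquiv.symm_apply_apply] at this
  exact this.symm

end Ring

section Baer

variable {A : Type*} [Ring A] (hA : Module.Baer A A)
include hA

theorem Module.Baer.exists_one_sub_mul_eq_one_of_isEssential {a : A}
    (ha : IsEssential (Ideal.torsionOf A A a)) :
    ∃ c, (1 - a) * c = 1 := by
  have hdisj : Disjoint (Ideal.torsionOf A A a) (Ideal.torsionOf A A (1 - a)) :=
    disjoint_def.mpr fun x hxa hx1a => by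
      simp only [Ideal.mem_torsionOf_iff, smul_eq_mul, mul_sub, mul_one] at hxa hx1a
      rwa [hxa, sub_zero] at hx1a
  obtain ⟨c, hc⟩ := hA.exists_mul_mul_eq (C := ⊤) (u := 1 - a)
    (by rw [ha hdisj]; exact disjoint_bot_right)
  exact ⟨c, by simpa using hc 1 trivial⟩

theorem Module.Baer.isUnit_one_sub_of_isEssential {a : A}
    (ha : IsEssential (Ideal.torsionOf A A a)) :
    IsUnit (1 - a) := by
  obtain ⟨c, hc⟩ := hA.exists_one_sub_mul_eq_one_of_isEssential ha
  have hc' : IsEssential (Ideal.torsionOf A A (-(a * c))) := ha.mono fun x hx => by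
    simp_all [← mul_assoc]
  obtain ⟨d, hd⟩ := hA.exists_one_sub_mul_eq_one_of_isEssential hc'
  have hc1 : c = 1 - -(a * c) := by rw [sub_neg_eq_add, ← hc]; noncomm_ring
  rw [← hc1] at hd
  have hda : d = 1 - a :=
    calc d = (1 - a) * c * d := by rw [hc, one_mul]
      _ = 1 - a := by rw [mul_assoc, hd, mul_one]
  exact isUnit_iff_exists.mpr ⟨c, hc, hda ▸ hd⟩

theorem Module.Baer.mem_jacobson_of_isEssential {d : A} (hd : IsEssential (Ideal.torsionOf A A d)) :
    d ∈ Ring.jacobson A := by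
  rw [← Ideal.jacobson_bot, Ideal.mem_jacobson_iff]
  intro y
  have hyd : IsEssential (Ideal.torsionOf A A (-y * d)) :=
    (hd.comap (LinearMap.toSpanSingleton A A (-y))).mono fun x hx => by
      simpa [mul_assoc] using hx
  obtain ⟨z, -, hz⟩ := isUnit_iff_exists.mp (hA.isUnit_one_sub_of_isEssential hyd)
  exact ⟨z, by rw [Ideal.mem_bot, ← hz]; noncomm_ring⟩

/-- Utumi: if `C` is maximal among the left ideals meeting the left annihilator `L` of `a`
trivially, then right multiplication by `a` embeds `C` into `A`; extending the inverse gives `b`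
with `c * a * b = c` on `C`, so `a - a * b * a` kills the essential left ideal `C ⊕ L`. -/
theorem Module.Baer.exists_sub_mul_mul_mem_jacobson (a : A) :
    ∃ b, a - a * b * a ∈ Ring.jacobson A := by
  obtain ⟨C, hC⟩ := exists_maximal_disjoint (Ideal.torsionOf A A a)
  obtain ⟨b, hb⟩ := hA.exists_mul_mul_eq hC.1
  refine ⟨b, hA.mem_jacobson_of_isEssential <|
    hC.isEssential_sup.mono (sup_le (fun c hc => ?_) fun x hx => ?_)⟩
  · simp [Ideal.mem_torsionOf_iff, mul_sub, ← mul_assoc, hb c hc]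
  · simp_all [Ideal.mem_torsionOf_iff, mul_sub, ← mul_assoc]

theorem Module.Baer.isSemisimpleModule_quotient_jacobson [IsNoetherianRing A] :
    IsSemisimpleModule A (A ⧸ Ring.jacobson A) := by
  set J := Ring.jacobson A
  refine isSemisimpleModule_of_isCompl_span_singleton fun z => ?_
  obtain ⟨x, rfl⟩ := J.mkQ_surjective z
  obtain ⟨b, hb⟩ := hA.exists_sub_mul_mul_mem_jacobson x
  have he : b * x * (b * x) - b * x ∈ J := by
    simpa [mul_sub, mul_assoc] using J.neg_mem (J.mul_mem_left b hb)
  have hspan : span A {J.mkQ x} = span A {J.mkQ (b * x)} := by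
    refine le_antisymm ((span_singleton_le_iff_mem _ _).mpr (mem_span_singleton.mpr ⟨x, ?_⟩))
      ((span_singleton_le_iff_mem _ _).mpr (mem_span_singleton.mpr ⟨b, ?_⟩))
    · rw [← map_smul, smul_eq_mul, mkQ_apply, mkQ_apply, Submodule.Quotient.eq, ← mul_assoc]
      simpa using J.neg_mem hb
    · rw [← map_smul, smul_eq_mul]
  exact ⟨_, hspan ▸ isCompl_span_mkQ_of_mul_self_sub_mem he⟩

theorem Module.Baer.isSemisimpleModule_jacobson [IsNoetherianRing A]
    (h : Ring.jacobson A * Ring.jacobson A = ⊥) : IsSemisimpleModule A (Ring.jacobson A) :=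
  have := hA.isSemisimpleModule_quotient_jacobson
  isSemisimpleModule_of_smul_eq_zero (Ring.jacobson A) fun _ ha m =>
    Subtype.ext ((mem_bot A).mp (h ▸ Ideal.mul_mem_mul ha m.2))

theorem Module.Baer.isFullyInvariant_comap_subtype (J I : Ideal A) [I.IsTwoSided] :
    (Submodule.comap J.subtype I).IsFullyInvariant := by
  intro f x hx
  obtain ⟨c, hc⟩ := hA.exists_mul_eq (J.subtype ∘ₗ f)
  have hfx : (f x : A) = x * c := hc x
  rw [mem_comap, mem_comap, subtype_apply, hfx]
  exact I.mul_mem_right c hx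

theorem Module.Baer.forall_isTwoSided_le_iff (J : Ideal A) [J.IsTwoSided] :
    (∀ I : Ideal A, I.IsTwoSided → I ≤ J → I = ⊥ ∨ I = J) ↔
      ∀ N : Submodule A J, N.IsFullyInvariant → N = ⊥ ∨ N = ⊤ := by
  have hmap := map_injective_of_injective J.injective_subtype
  constructor
  · intro h N hN
    refine (h _ hN.isTwoSided_map_subtype (map_subtype_le J N)).imp (fun hbot => ?_) fun htop => ?_
    · exact hmap (hbot.trans (Submodule.map_bot _).symm)
    · exact hmap (htop.trans (by rw [Submodule.map_top, range_subtype]))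
  · intro h I _ hIJ
    have hI : (Submodule.comap J.subtype I).map J.subtype = I := by
      rw [map_comap_subtype, inf_eq_right.mpr hIJ]
    refine (h _ (hA.isFullyInvariant_comap_subtype J I)).imp (fun hbot => ?_) fun htop => ?_
    · rw [← hI, hbot, Submodule.map_bot]
    · rw [← hI, htop, Submodule.map_top, range_subtype]

theorem Module.Baer.forall_isTwoSided_le_jacobson_iff [IsNoetherianRing A] :
    (∀ I : Ideal A, I.IsTwoSided → I ≤ Ring.jacobson A → I = ⊥ ∨ I = Ring.jacobson A) ↔
      IsSemisimpleModule A (Ring.jacobson A) ∧ IsIsotypic A (Ring.jacobson A) := by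
  constructor
  · intro h
    have hJJ : Ring.jacobson A * Ring.jacobson A = ⊥ := by
      rcases h (Ring.jacobson A * Ring.jacobson A) inferInstance Ideal.mul_le_left with hJJ | hJJ
      · exact hJJ
      · rw [Ring.jacobson_eq_bot_of_mul_self_eq hJJ, Ideal.mul_bot]
    have := hA.isSemisimpleModule_jacobson hJJ
    exact ⟨this, isIsotypic_iff_isFullyInvariant_imp_bot_or_top.mpr
      ((hA.forall_isTwoSided_le_iff _).mp h)⟩
  · rintro ⟨_, hiso⟩
    exact (hA.forall_isTwoSided_le_iff _).mpr
      (isIsotypic_iff_isFullyInvariant_imp_bot_or_top.mp hiso)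

end Baer

/-- for a quasi-Frobenius ring `R`, TFAE: (1) every two-sided ideal
contained in `J(R)` equals `0` or `J(R)`; (2) `J(R)` is a homogeneous semisimple right
`R`-module (semisimple with all simple submodules pairwise isomorphic). -/
theorem stmt_19 (R : Type u) [Ring R] (hqf : IsQF R) :
    (∀ I : Ideal Rᵐᵒᵖ, IsTwoSidedRI R I → I ≤ (⊥ : Ideal Rᵐᵒᵖ).jacobson →
      I = ⊥ ∨ I = (⊥ : Ideal Rᵐᵒᵖ).jacobson) ↔
    (IsSemisimpleModule Rᵐᵒᵖ ((⊥ : Ideal Rᵐᵒᵖ).jacobson) ∧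
      ∀ S T : Submodule Rᵐᵒᵖ ((⊥ : Ideal Rᵐᵒᵖ).jacobson),
        IsSimpleModule Rᵐᵒᵖ S → IsSimpleModule Rᵐᵒᵖ T →
          Nonempty (S ≃ₗ[Rᵐᵒᵖ] T)) := by
  obtain ⟨_, hinj⟩ := hqf
  have hA : Module.Baer Rᵐᵒᵖ Rᵐᵒᵖ := fun I g =>
    (hinj Rᵐᵒᵖ I g).imp fun _ hg x hx => hg ⟨x, hx⟩
  have htwo (I : Ideal Rᵐᵒᵖ) : IsTwoSidedRI R I ↔ I.IsTwoSided :=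
    ⟨fun h => ⟨fun b hx => h _ hx b.unop⟩, fun h _ hx _ => h.mul_mem_of_left _ hx⟩
  rw [Ideal.jacobson_bot]
  simp only [htwo, hA.forall_isTwoSided_le_jacobson_iff]
  exact and_congr_right fun _ => ⟨fun h S T _ _ => h T S, fun h S _ T _ => h T S ‹_› ‹_›⟩
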